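/- Let f : ℂ → ℂ be a complex polynomial with f(0) = 0 of multiplicity k ≥ 2 at the origin, let a, b, t ∈ ℝ with t ≠ 0 and (a,b) ≠ (0,0), and set G_t(z) = −2i(f'(z))² conj(f''(z)) + 2ti(a+ib) f''(z) conj(f'(z)). Then the origin is an isolated zero of G_t, and the winding number of G_t/|G_t| on a sufficiently small circle around the origin equals −1. -/

import Mathlib

open Complex Real

noncomputable section

/-- `G_t(z) = −2i(f'(z))² conj(f''(z)) + 2ti(a+ib) f''(z) conj(f'(z))`. -/
def Gt (f : Polynomial ℂ) (a b t : ℝ) (z : ℂ) : ℂ :=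
  -2 * Complex.I * (f.derivative.eval z) ^ 2 * (starRingEnd ℂ) (f.derivative.derivative.eval z) +
    2 * t * Complex.I * (a + Complex.I * b) * f.derivative.derivative.eval z *
      (starRingEnd ℂ) (f.derivative.eval z)

/-!
Write `f' = z^(k-1) h` and `f'' = z^(k-2) m` with `h(0), m(0) ≠ 0`. For `z ≠ 0` this gives
`G_t(z) = |z|^(2(k-2)) · conj z · W(z)`, where `W(z) = 2ti(a+ib) m(z) conj(h(z)) + O(|z|^(k-1))`
is continuous with `W(0) ≠ 0`. On a small circle `W` stays in a disc around `W(0)` that misses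
the origin, so `arg (W / W(0))` is a continuous angle that returns to its starting value, and the
winding number of `G_t` is that of `conj z`, namely `-1`.
-/

open Polynomial Filter Topology ComplexConjugate

namespace Polynomial

variable {R : Type*} [CommRing R]

theorem exists_eq_X_pow_rootMultiplicity_mul {p : R[X]} (hp : p ≠ 0) :
    ∃ q : R[X], p = X ^ p.rootMultiplicity 0 * q ∧ q.eval 0 ≠ 0 := by
  obtain ⟨q, hpq, hq⟩ := p.exists_eq_pow_rootMultiplicity_mul_and_not_dvd hp 0
  refine ⟨q, by simpa using hpq, fun hq0 => hq ?_⟩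
  simpa [X_dvd_iff, coeff_zero_eq_eval_zero] using hq0

theorem exists_derivative_X_pow_succ_mul [NoZeroDivisors R] [CharZero R] (n : ℕ) {q : R[X]}
    (hq : q.eval 0 ≠ 0) :
    ∃ q' : R[X], derivative (X ^ (n + 1) * q) = X ^ n * q' ∧ q'.eval 0 ≠ 0 := by
  refine ⟨C ((n : R) + 1) * q + X * derivative q, ?_, ?_⟩
  · rw [derivative_mul, derivative_X_pow]
    push_cast
    ring
  · simp only [eval_add, eval_mul, eval_C, eval_X, zero_mul, add_zero]
    exact mul_ne_zero (Nat.cast_add_one_ne_zero n) hq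

end Polynomial

theorem exists_continuous_angle_of_eq_exp_mul {F v : ℝ → ℂ} {r : ℝ → ℝ} {c : ℂ} (n : ℝ)
    (hv : Continuous v) (hvc : ∀ s, ‖v s - c‖ < ‖c‖) (hr : ∀ s, 0 < r s)
    (hF : ∀ s, F s = r s * exp (↑(n * s) * I) * v s) :
    ∃ θ : ℝ → ℝ, Continuous θ ∧ (∀ s, F s / ‖F s‖ = exp (I * θ s)) ∧
      ∀ s₁ s₂, v s₁ = v s₂ → θ s₁ - θ s₂ = n * (s₁ - s₂) := by
  have hc : c ≠ 0 := by
    rintro rfl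
    exact (norm_nonneg _).not_gt (by simpa using hvc 0)
  -- `v / c` stays in the unit disc around `1`, where `arg` is continuous.
  have hslit : ∀ s, v s / c ∈ slitPlane := fun s => by
    have := mem_slitPlane_of_norm_lt_one (z := v s / c - 1) <| by
      rw [div_sub_one hc, norm_div, div_lt_one (norm_pos_iff.mpr hc)]
      exact hvc s
    simpa using this
  refine ⟨fun s => n * s + arg (v s / c) + arg c, ?_, fun s => ?_, fun s₁ s₂ h => ?_⟩
  · refine ((continuous_const.mul continuous_id).add ?_).add continuous_const
    exact continuous_iff_continuousAt.mpr fun s =>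
      (continuousAt_arg (hslit s)).comp (f := fun s => v s / c) (hv.div_const c).continuousAt
  · have hu := slitPlane_ne_zero (hslit s)
    set u := v s / c with hu_def
    have hpolar : F s = ↑(r s * ‖u‖ * ‖c‖) * exp (↑(n * s + arg u + arg c) * I) := by
      have hvs : v s = ‖u‖ * exp (arg u * I) * (‖c‖ * exp (arg c * I)) := by
        rw [norm_mul_exp_arg_mul_I, norm_mul_exp_arg_mul_I, hu_def, div_mul_cancel₀ _ hc]
      rw [hF, hvs]
      push_cast
      rw [add_mul, add_mul, Complex.exp_add, Complex.exp_add]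
      ring
    have hpos : 0 < r s * ‖u‖ * ‖c‖ := by
      have := hr s
      positivity
    rw [hpolar, norm_mul, norm_exp_ofReal_mul_I, mul_one, norm_real, norm_of_nonneg hpos.le,
      mul_div_cancel_left₀ _ (ofReal_ne_zero.mpr hpos.ne'), mul_comm]
  · simp only [h]
    ring

theorem Complex.continuous_pow_add_two_div_conj (n : ℕ) :
    Continuous fun z : ℂ => z ^ (n + 2) / conj z := by
  have hnorm : ∀ z : ℂ, ‖z ^ (n + 2) / conj z‖ = ‖z‖ ^ (n + 1) := fun z => by
    rcases eq_or_ne z 0 with rfl | hz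
    · simp
    · rw [norm_div, norm_conj, norm_pow, pow_succ _ (n + 1),
        mul_div_cancel_right₀ _ (norm_ne_zero_iff.mpr hz)]
  refine continuous_iff_continuousAt.mpr fun z => ?_
  rcases eq_or_ne z 0 with rfl | hz
  -- The junk value `0 / 0 = 0` at the origin is also the limit there.
  · have : Tendsto (fun z : ℂ => ‖z‖ ^ (n + 1)) (𝓝 0) (𝓝 0) :=
      (continuous_norm.pow (n + 1)).tendsto' 0 0 (by simp)
    show Tendsto _ (𝓝 0) (𝓝 (0 ^ (n + 2) / conj 0))
    rw [map_zero, div_zero]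
    exact tendsto_zero_iff_norm_tendsto_zero.mpr (by simpa only [hnorm] using this)
  · exact (continuous_pow _).continuousAt.div (continuous_conj.continuousAt)
      ((_root_.map_ne_zero conj).mpr hz)

/-- For `f' = X ^ (j + 1) * h` and `f'' = X ^ j * m`, away from the origin `Gt f a b t z` equals
`‖z‖ ^ (2 * j) * conj z * GtReduced h m j a b t z`. -/
def GtReduced (h m : ℂ[X]) (j : ℕ) (a b t : ℝ) (z : ℂ) : ℂ :=
  2 * t * I * (a + I * b) * m.eval z * conj (h.eval z) -
    2 * I * (z ^ (j + 2) / conj z) * h.eval z ^ 2 * conj (m.eval z)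

section GtReduced

variable {f : ℂ[X]} (h m : ℂ[X]) (j : ℕ) (a b t : ℝ)

theorem Gt_eq_mul_GtReduced (hf' : derivative f = X ^ (j + 1) * h)
    (hf'' : derivative (derivative f) = X ^ j * m) {z : ℂ} (hz : z ≠ 0) :
    Gt f a b t z = ↑(‖z‖ ^ (2 * j)) * conj z * GtReduced h m j a b t z := by
  have hz' : conj z ≠ 0 := (_root_.map_ne_zero conj).mpr hz
  have hnormSq : (↑(‖z‖ ^ (2 * j)) : ℂ) = (z * conj z) ^ j := by
    rw [mul_conj, normSq_eq_norm_sq, pow_mul]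
    push_cast
    rfl
  rw [Gt, hf'', hf', hnormSq, GtReduced]
  simp only [eval_mul, eval_pow, eval_X, map_mul, map_pow]
  field_simp
  ring

theorem continuous_GtReduced : Continuous (GtReduced h m j a b t) := by
  unfold GtReduced
  have := Complex.continuous_pow_add_two_div_conj j
  fun_prop

theorem GtReduced_zero_ne_zero (ht : t ≠ 0) (hab : (a, b) ≠ (0, 0)) (hh : h.eval 0 ≠ 0)
    (hm : m.eval 0 ≠ 0) : GtReduced h m j a b t 0 ≠ 0 := by
  have hab' : (a : ℂ) + I * b ≠ 0 := by
    contrapose! hab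
    simpa [Complex.ext_iff] using hab
  simp [GtReduced, ht, hab', hh, hm]

end GtReduced

theorem winding_of_Gt_at_origin_general (f : Polynomial ℂ) (k : ℕ) (hk : 2 ≤ k)
    (hmult : f.rootMultiplicity 0 = k)
    (a b t : ℝ) (ht : t ≠ 0) (hab : (a, b) ≠ (0, 0)) :
    ∃ ε₀ : ℝ, 0 < ε₀ ∧ (∀ z : ℂ, z ≠ 0 → ‖z‖ < ε₀ → Gt f a b t z ≠ 0) ∧
      ∀ ε : ℝ, 0 < ε → ε < ε₀ →
        ∃ θ : ℝ → ℝ, Continuous θ ∧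
          (∀ s : ℝ,
            Gt f a b t (circleMap 0 ε s) /
                (‖Gt f a b t (circleMap 0 ε s)‖ : ℂ) =
              Complex.exp (Complex.I * θ s)) ∧
          θ (2 * π) - θ 0 = 2 * π * (-1 : ℝ) := by
  obtain ⟨j, rfl⟩ : ∃ j, k = j + 2 := ⟨k - 2, by omega⟩
  have hf : f ≠ 0 := by
    rintro rfl
    simp at hmult
  obtain ⟨g, hfg, hg⟩ := exists_eq_X_pow_rootMultiplicity_mul hf
  obtain ⟨h, hf', hh⟩ := exists_derivative_X_pow_succ_mul (j + 1) hg
  obtain ⟨m, hf'', hm⟩ := exists_derivative_X_pow_succ_mul j hh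
  rw [← hmult, ← hfg] at hf'
  rw [← hf'] at hf''
  have hW0 := norm_pos_iff.mpr (GtReduced_zero_ne_zero h m j a b t ht hab hh hm)
  obtain ⟨ε₀, hε₀, hW⟩ := Metric.continuous_iff.mp (continuous_GtReduced h m j a b t) 0 _ hW0
  simp only [dist_eq_norm, sub_zero] at hW
  set W := GtReduced h m j a b t
  refine ⟨ε₀, hε₀, fun z hz hzε => ?_, fun ε hε hεε₀ => ?_⟩
  · have hWz : W z ≠ 0 := fun hWz => by simpa [hWz] using hW z hzε
    rw [Gt_eq_mul_GtReduced h m j a b t hf' hf'' hz]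
    simpa [hz] using hWz
  · obtain ⟨θ, hθ, hθG, hθv⟩ := exists_continuous_angle_of_eq_exp_mul
      (F := fun s => Gt f a b t (circleMap 0 ε s)) (r := fun _ => ε ^ (2 * j + 1)) (-1)
      ((continuous_GtReduced h m j a b t).comp (continuous_circleMap 0 ε))
      (fun s => hW _ (by simpa [abs_of_pos hε] using hεε₀)) (fun _ => by positivity) fun s => by
        rw [Gt_eq_mul_GtReduced h m j a b t hf' hf'' (circleMap_ne_center hε.ne'),
          norm_circleMap_zero, abs_of_pos hε, conj_circleMap_zero, Function.comp_apply,
          circleMap_zero ε (-s)]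
        push_cast
        ring_nf
    refine ⟨θ, hθ, hθG, ?_⟩
    rw [hθv _ _ (congrArg W (by simpa using periodic_circleMap 0 ε 0))]
    ring

theorem winding_of_Gt_at_origin (f : Polynomial ℂ) (hf : f ≠ 0) (k : ℕ) (hk : 2 ≤ k)
    (h0 : f.eval 0 = 0) (hmult : f.rootMultiplicity 0 = k)
    (a b t : ℝ) (ht : t ≠ 0) (hab : (a, b) ≠ (0, 0)) :
    ∃ ε₀ : ℝ, 0 < ε₀ ∧ (∀ z : ℂ, z ≠ 0 → ‖z‖ < ε₀ → Gt f a b t z ≠ 0) ∧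
      ∀ ε : ℝ, 0 < ε → ε < ε₀ →
        ∃ θ : ℝ → ℝ, Continuous θ ∧
          (∀ s : ℝ,
            Gt f a b t (circleMap 0 ε s) /
                (‖Gt f a b t (circleMap 0 ε s)‖ : ℂ) =
              Complex.exp (Complex.I * θ s)) ∧
          θ (2 * π) - θ 0 = 2 * π * (-1 : ℝ) :=
  winding_of_Gt_at_origin_general f k hk hmult a b t ht hab

end
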